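/- Let x, y, w ∈ ℝ with x ∈ [0,1], y ∈ [0,1], and max{x + y − 1, 0} ≤ w ≤ min{x, y}. Then x − x² ≥ |w − x·y|. -/
import Mathlib

/-- For x, y ∈ [0,1] and w with max{x+y−1, 0} ≤ w ≤ min{x, y},
we have x − x² ≥ |w − x·y|. -/
theorem stmt_8 (x y w : ℝ) (hx : x ∈ Set.Icc (0 : ℝ) 1) (hy : y ∈ Set.Icc (0 : ℝ) 1)
    (hw₁ : max (x + y - 1) 0 ≤ w) (hw₂ : w ≤ min x y) :
    |w - x * y| ≤ x - x ^ 2 := by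
  obtain ⟨hx0, hx1⟩ := hx
  obtain ⟨hy0, hy1⟩ := hy
  have h1 : x + y - 1 ≤ w := le_trans (le_max_left _ _) hw₁
  have h2 : (0 : ℝ) ≤ w := le_trans (le_max_right _ _) hw₁
  have h3 : w ≤ x := le_trans hw₂ (min_le_left _ _)
  have h4 : w ≤ y := le_trans hw₂ (min_le_right _ _)
  rw [abs_le]
  constructor
  · rcases le_total y (1 - x) with h | h
    · nlinarith
    · nlinarith
  · rcases le_total y x with h | h
    · nlinarith
    · nlinarith
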